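/- Assume n ≥ 2, M_{{1}} ≤ M_{{2}}, and min_{x∈Δ_m} u^L(x,2) < M_{{1}}. Then there exist x, y ∈ Δ_m such that u^L(x,1) = u^L(y,2) = M_{{1,2}}. -/

import Mathlib

open scoped Classical
open Finset

noncomputable section

/-- The leader's mixed-strategy simplex Δ_m. -/
def simplex (m : ℕ) : Set (Fin m → ℝ) := stdSimplex ℝ (Fin m)

/-- Linear extension of a payoff matrix to mixed strategies: u(x,j) = ∑ i, x i * u i j. -/
def pay {m n : ℕ} (u : Fin m → Fin n → ℝ) (x : Fin m → ℝ) (j : Fin n) : ℝ :=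
  ∑ i, x i * u i j

/-- Inner product on ℝ^m. -/
def dot {m : ℕ} (a x : Fin m → ℝ) : ℝ := ∑ i, a i * x i

/-- min_{j ∈ S} u(x, j). -/
def minOnL {m n : ℕ} (u : Fin m → Fin n → ℝ) (S : Set (Fin n)) (x : Fin m → ℝ) : ℝ :=
  sInf ((fun j => pay u x j) '' S)

/-- The leader's maximin value M_S = max_{x∈Δ_m} min_{j∈S} u(x,j). -/
def Mval {m n : ℕ} (u : Fin m → Fin n → ℝ) (S : Set (Fin n)) : ℝ :=
  sSup (minOnL u S '' simplex m)

/-- The set 𝓜_S of maximin strategies. -/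
def argMM {m n : ℕ} (u : Fin m → Fin n → ℝ) (S : Set (Fin n)) : Set (Fin m → ℝ) :=
  {x ∈ simplex m | minOnL u S x = Mval u S}

/-- The follower's best-response set BR(x) = argmax_j uF(x,j). -/
def BR {m n : ℕ} (uF : Fin m → Fin n → ℝ) (x : Fin m → ℝ) : Set (Fin n) :=
  {j | ∀ j', pay uF x j' ≤ pay uF x j}

/-- Strong Stackelberg equilibrium of the game (uL, uF). -/
def SSE {m n : ℕ} (uL uF : Fin m → Fin n → ℝ) (x : Fin m → ℝ) (j : Fin n) : Prop :=
  x ∈ simplex m ∧ j ∈ BR uF x ∧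
    ∀ x' ∈ simplex m, ∀ j' ∈ BR uF x', pay uL x' j' ≤ pay uL x j

/-- (x, j) is inducible with respect to the leader payoff uL. -/
def Inducible {m n : ℕ} (uL : Fin m → Fin n → ℝ) (x : Fin m → ℝ) (j : Fin n) : Prop :=
  ∃ uF : Fin m → Fin n → ℝ, SSE uL uF x j

/-- μ is a (maximin-)cover of S w.r.t. uL: max_{x∈𝓜_S} max_{j∈BR(x)} uL(x,j) < M_S. -/
def IsCover {m n : ℕ} (uL μ : Fin m → Fin n → ℝ) (S : Set (Fin n)) : Prop :=
  ∀ x ∈ argMM uL S, ∀ j ∈ BR μ x, pay uL x j < Mval uL S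

/-- μ is a proper cover of S w.r.t. uL. -/
def IsProperCover {m n : ℕ} (uL μ : Fin m → Fin n → ℝ) (S : Set (Fin n)) : Prop :=
  IsCover uL μ S ∧ ∀ x ∈ simplex m, ∀ j ∈ S, j ∉ BR μ x

/-!
Both payoffs `u(·,1)`, `u(·,2)` are continuous on the compact, connected simplex, so each
takes every value between its minimum and maximum. `M_{1,2}` is at most either maximum, and it
is at least `min_x u(x,i)` provided that `min_x u(x,i) ≤ max_x u(x,k)` for the other action `k`:
evaluate `min (u(·,1), u(·,2))` at a maximiser of `u(·,k)`.
-/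

section MaxMin

variable {X α : Type*} [TopologicalSpace X] [ConditionallyCompleteLinearOrder α]
  [TopologicalSpace α] [OrderTopology α] {K : Set X} {f g : X → α}

theorem IsCompact.mem_image_of_csInf_le_of_le_csSup (hK : IsCompact K) (hKc : IsPreconnected K)
    (hne : K.Nonempty) (hf : ContinuousOn f K) {c : α}
    (hlo : sInf (f '' K) ≤ c) (hhi : c ≤ sSup (f '' K)) : c ∈ f '' K :=
  (hKc.image f hf).Icc_subset ((hK.image_of_continuousOn hf).sInf_mem (hne.image f))
    ((hK.image_of_continuousOn hf).sSup_mem (hne.image f)) ⟨hlo, hhi⟩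

theorem IsCompact.csSup_image_min_le_left (hK : IsCompact K) (hne : K.Nonempty)
    (hf : ContinuousOn f K) :
    sSup ((fun x => min (f x) (g x)) '' K) ≤ sSup (f '' K) :=
  csSup_le (hne.image _) <| Set.forall_mem_image.2 fun _ hx =>
    (min_le_left _ _).trans (le_csSup (hK.image_of_continuousOn hf).bddAbove ⟨_, hx, rfl⟩)

theorem IsCompact.csInf_image_le_csSup_image_min (hK : IsCompact K) (hne : K.Nonempty)
    (hf : ContinuousOn f K) (hg : ContinuousOn g K) (h : sInf (f '' K) ≤ sSup (g '' K)) :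
    sInf (f '' K) ≤ sSup ((fun x => min (f x) (g x)) '' K) := by
  obtain ⟨b, hbK, hb⟩ := hK.exists_sSup_image_eq hne hg
  have hfb : sInf (f '' K) ≤ f b :=
    csInf_le (hK.image_of_continuousOn hf).bddBelow ⟨b, hbK, rfl⟩
  calc sInf (f '' K) ≤ min (f b) (g b) := le_min hfb (hb ▸ h)
    _ ≤ _ := le_csSup (hK.image_of_continuousOn (hf.inf hg)).bddAbove ⟨b, hbK, rfl⟩

end MaxMin

theorem simplex_nonempty {m : ℕ} (hm : 0 < m) : (simplex m).Nonempty :=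
  ⟨Pi.single ⟨0, hm⟩ 1, single_mem_stdSimplex ℝ _⟩

theorem continuous_pay {m n : ℕ} (u : Fin m → Fin n → ℝ) (j : Fin n) :
    Continuous fun x => pay u x j := by
  unfold pay; fun_prop

theorem Mval_singleton {m n : ℕ} (u : Fin m → Fin n → ℝ) (j : Fin n) :
    Mval u {j} = sSup ((fun x => pay u x j) '' simplex m) := by
  unfold Mval minOnL
  simp only [Set.image_singleton, csInf_singleton]

theorem Mval_pair {m n : ℕ} (u : Fin m → Fin n → ℝ) (j₁ j₂ : Fin n) :
    Mval u {j₁, j₂} = sSup ((fun x => min (pay u x j₁) (pay u x j₂)) '' simplex m) := by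
  unfold Mval minOnL
  simp only [Set.image_pair, csInf_pair]

theorem first_reference_pair_general {m n : ℕ} (hm : 0 < m)
    (uL : Fin m → Fin n → ℝ) (j1 j2 : Fin n)
    (hM : Mval uL {j1} ≤ Mval uL {j2})
    (hmin : sInf ((fun x => pay uL x j2) '' simplex m) < Mval uL {j1}) :
    ∃ x ∈ simplex m, ∃ y ∈ simplex m,
      pay uL x j1 = Mval uL {j1, j2} ∧ pay uL y j2 = Mval uL {j1, j2} := by
  have hK : IsCompact (simplex m) := isCompact_stdSimplex ℝ (Fin m)
  have hKc : IsPreconnected (simplex m) := (convex_stdSimplex ℝ (Fin m)).isPreconnected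
  have hne := simplex_nonempty hm
  have hf₁ := (continuous_pay uL j1).continuousOn (s := simplex m)
  have hf₂ := (continuous_pay uL j2).continuousOn (s := simplex m)
  rw [Mval_singleton, Mval_singleton] at hM
  rw [Mval_singleton] at hmin
  have hinf₁ : sInf ((fun x => pay uL x j1) '' simplex m) ≤
      sSup ((fun x => pay uL x j2) '' simplex m) :=
    (csInf_le_csSup (hne.image _) (hK.image_of_continuousOn hf₁).bddBelow
      (hK.image_of_continuousOn hf₁).bddAbove).trans hM
  obtain ⟨x, hxK, hx⟩ : Mval uL {j1, j2} ∈ (fun x => pay uL x j1) '' simplex m := by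
    rw [Mval_pair]
    exact hK.mem_image_of_csInf_le_of_le_csSup hKc hne hf₁
      (hK.csInf_image_le_csSup_image_min hne hf₁ hf₂ hinf₁)
      (hK.csSup_image_min_le_left hne hf₁)
  obtain ⟨y, hyK, hy⟩ : Mval uL {j1, j2} ∈ (fun x => pay uL x j2) '' simplex m := by
    rw [Set.pair_comm, Mval_pair]
    exact hK.mem_image_of_csInf_le_of_le_csSup hKc hne hf₂
      (hK.csInf_image_le_csSup_image_min hne hf₂ hf₁ hmin.le)
      (hK.csSup_image_min_le_left hne hf₂)
  exact ⟨x, hxK, y, hyK, hx, hy⟩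

/-- there exist x, y ∈ Δ_m with u^L(x,1) = u^L(y,2) = M_{1,2}
(the first reference pair). Actions 1, 2 are j1, j2. -/
theorem first_reference_pair {m n : ℕ} (hm : 0 < m)
    (uL : Fin m → Fin n → ℝ) (j1 j2 : Fin n) (hj : j1 ≠ j2)
    (hM : Mval uL {j1} ≤ Mval uL {j2})
    (hmin : sInf ((fun x => pay uL x j2) '' simplex m) < Mval uL {j1}) :
    ∃ x ∈ simplex m, ∃ y ∈ simplex m,
      pay uL x j1 = Mval uL {j1, j2} ∧ pay uL y j2 = Mval uL {j1, j2} :=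
  first_reference_pair_general hm uL j1 j2 hM hmin
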